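/- arXiv:math/0211208 — 5 statements merged into one kernel-verified Lean document; each statement's English description precedes it below -/
import Mathlib

section
/- For every g = [[A,B],[C,D]] ∈ Sp(Λ_p,ℤ) (2×2 blocks), the entries a₂₁, b₂₁, c₂₁, d₂₁ are divisible by p. -/
open Matrix

/-- The symplectic form `Λ_p`. -/
def Lam (p : ℤ) : Matrix (Fin 4) (Fin 4) ℤ :=
  !![0, 0, 1, 0; 0, 0, 0, p; -1, 0, 0, 0; 0, -p, 0, 0]

/-- `Sp(Λ_p, ℤ)`. -/
def SpL (p : ℤ) : Set (Matrix (Fin 4) (Fin 4) ℤ) :=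
  {g | IsUnit g.det ∧ g * Lam p * gᵀ = Lam p}

/-- The integer matrix `p • (Lam p)⁻¹`. -/
def Mp (p : ℤ) : Matrix (Fin 4) (Fin 4) ℤ :=
  !![0, 0, -p, 0; 0, 0, 0, -1; p, 0, 0, 0; 0, 1, 0, 0]

theorem lamMp (p : ℤ) : Lam p * Mp p = p • 1 := by
  ext i j
  fin_cases i <;> fin_cases j <;>
    simp [Lam, Mp, Matrix.mul_apply, Fin.sum_univ_four, Matrix.one_apply,
      Matrix.vecHead, Matrix.vecTail]

theorem mpLam (p : ℤ) : Mp p * Lam p = p • 1 := by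
  ext i j
  fin_cases i <;> fin_cases j <;>
    simp [Lam, Mp, Matrix.mul_apply, Fin.sum_univ_four, Matrix.one_apply,
      Matrix.vecHead, Matrix.vecTail]

/-- For `g = [[A,B],[C,D]] ∈ Sp(Λ_p,ℤ)` the entries `a₂₁, b₂₁, c₂₁, d₂₁`
are divisible by `p`. -/
theorem stmt_7 (p : ℕ) (hp : p.Prime) (g : Matrix (Fin 4) (Fin 4) ℤ)
    (hg : g ∈ SpL (p : ℤ)) :
    (p : ℤ) ∣ g 1 0 ∧ (p : ℤ) ∣ g 1 2 ∧ (p : ℤ) ∣ g 3 0 ∧ (p : ℤ) ∣ g 3 2 := by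
  obtain ⟨hdet, hΛ⟩ := hg
  haveI := g.invertibleOfIsUnitDet hdet
  have hgB : g * (Lam (p:ℤ) * gᵀ * Mp (p:ℤ)) = (p:ℤ) • 1 := by
    calc g * (Lam (p:ℤ) * gᵀ * Mp (p:ℤ)) = (g * Lam (p:ℤ) * gᵀ) * Mp (p:ℤ) := by
          noncomm_ring
      _ = (p:ℤ) • 1 := by rw [hΛ, lamMp]
  have hB : Lam (p:ℤ) * gᵀ * Mp (p:ℤ) = ⅟g * ((p:ℤ) • 1) := by
    rw [← hgB, ← Matrix.mul_assoc, invOf_mul_self, Matrix.one_mul]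
  have hBg : Lam (p:ℤ) * gᵀ * Mp (p:ℤ) * g = (p:ℤ) • 1 := by
    rw [hB, Matrix.mul_assoc, Matrix.smul_mul, Matrix.one_mul, Matrix.mul_smul,
      invOf_mul_self]
  have hkey : gᵀ * Mp (p:ℤ) * g = Mp (p:ℤ) := by
    have h2 : (p:ℤ) • (gᵀ * Mp (p:ℤ) * g) = (p:ℤ) • Mp (p:ℤ) := by
      calc (p:ℤ) • (gᵀ * Mp (p:ℤ) * g)
          = (Mp (p:ℤ) * Lam (p:ℤ)) * (gᵀ * Mp (p:ℤ) * g) := by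
            rw [mpLam, Matrix.smul_mul, Matrix.one_mul]
        _ = Mp (p:ℤ) * (Lam (p:ℤ) * gᵀ * Mp (p:ℤ) * g) := by noncomm_ring
        _ = (p:ℤ) • Mp (p:ℤ) := by rw [hBg, Matrix.mul_smul, Matrix.mul_one]
    have hp0 : (p:ℤ) ≠ 0 := by exact_mod_cast hp.ne_zero
    ext i j
    have := congrFun (congrFun h2 i) j
    simp only [Matrix.smul_apply, smul_eq_mul] at this
    exact mul_left_cancel₀ hp0 this
  have e01 := congrFun (congrFun hkey 0) 1
  have e03 := congrFun (congrFun hkey 0) 3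
  have e13 := congrFun (congrFun hkey 1) 3
  have e21 := congrFun (congrFun hkey 2) 1
  have e23 := congrFun (congrFun hkey 2) 3
  simp [Matrix.mul_apply, Fin.sum_univ_four, Mp, Matrix.vecHead, Matrix.vecTail]
    at e01 e03 e13 e21 e23
  haveI := Fact.mk hp
  have C01 := congrArg (fun z : ℤ => (z : ZMod p)) e01
  have C03 := congrArg (fun z : ℤ => (z : ZMod p)) e03
  have C13 := congrArg (fun z : ℤ => (z : ZMod p)) e13
  have C21 := congrArg (fun z : ℤ => (z : ZMod p)) e21
  have C23 := congrArg (fun z : ℤ => (z : ZMod p)) e23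
  push_cast at C01 C03 C13 C21 C23
  simp only [ZMod.natCast_self, zero_mul, mul_zero, add_zero, zero_add]
    at C01 C03 C13 C21 C23
  refine ⟨?_, ?_, ?_, ?_⟩ <;> rw [← ZMod.intCast_zmod_eq_zero_iff_dvd]
  · linear_combination (g 1 0 : ZMod p) * C13 + (g 1 3 : ZMod p) * C01
      - (g 1 1 : ZMod p) * C03
  · linear_combination (g 1 2 : ZMod p) * C13 + (g 1 3 : ZMod p) * C21
      - (g 1 1 : ZMod p) * C23
  · linear_combination (g 3 0 : ZMod p) * C13 + (g 3 3 : ZMod p) * C01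
      - (g 3 1 : ZMod p) * C03
  · linear_combination (g 3 2 : ZMod p) * C13 + (g 3 3 : ZMod p) * C21
      - (g 3 1 : ZMod p) * C23
end

section
/- For every g ∈ Sp(Λ_p,ℤ), the conjugate W̃_p g W̃_p has integer entries and lies in Sp(Λ_p,ℤ), where W̃_p = (1/√p)·[[0,1,0,0],[p,0,0,0],[0,0,0,1],[0,0,p,0]]. -/
open Matrix

/-- The matrix `W̃_p`. -/
noncomputable def Wt (p : ℕ) : Matrix (Fin 4) (Fin 4) ℝ :=
  (Real.sqrt p)⁻¹ •
    (!![0, 1, 0, 0; (p : ℝ), 0, 0, 0; 0, 0, 0, 1; 0, 0, (p : ℝ), 0] : Matrix (Fin 4) (Fin 4) ℝ)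

set_option maxHeartbeats 1000000

/-- For every `g ∈ Sp(Λ_p,ℤ)`, the conjugate `W̃_p g W̃_p` has integer entries
and lies in `Sp(Λ_p,ℤ)`. -/
theorem stmt_8 (p : ℕ) (hp : p.Prime) (g : Matrix (Fin 4) (Fin 4) ℤ)
    (hg : g ∈ SpL (p : ℤ)) :
    ∃ h ∈ SpL (p : ℤ),
      h.map (Int.cast : ℤ → ℝ) = Wt p * g.map (Int.cast : ℤ → ℝ) * Wt p := by
  obtain ⟨hdet, hsymp⟩ := hg
  have hp0 : (p : ℤ) ≠ 0 := Int.natCast_ne_zero.mpr hp.ne_zero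
  have hgu : IsUnit g := (Matrix.isUnit_iff_isUnit_det g).2 hdet
  set L : Matrix (Fin 4) (Fin 4) ℤ := Lam (p : ℤ) with hL
  set L' : Matrix (Fin 4) (Fin 4) ℤ :=
    !![0,0,-(p:ℤ),0; 0,0,0,-1; (p:ℤ),0,0,0; 0,1,0,0] with hL'
  have smul_cancel : ∀ (c : ℤ), c ≠ 0 → ∀ A B : Matrix (Fin 4) (Fin 4) ℤ,
      c • A = c • B → A = B := by
    intro c hc A B hAB
    ext i j
    have := congrFun (congrFun hAB i) j
    simp only [Matrix.smul_apply, smul_eq_mul] at this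
    exact mul_left_cancel₀ hc this
  have hLL' : L * L' = (p:ℤ) • 1 := by
    ext i j
    fin_cases i <;> fin_cases j <;>
      simp [hL, hL', Lam, Matrix.mul_apply, Fin.sum_univ_four, Matrix.smul_apply,
        Matrix.one_apply, Matrix.vecHead, Matrix.vecTail]
  have hL'L : L' * L = (p:ℤ) • 1 := by
    ext i j
    fin_cases i <;> fin_cases j <;>
      simp [hL, hL', Lam, Matrix.mul_apply, Fin.sum_univ_four, Matrix.smul_apply,
        Matrix.one_apply, Matrix.vecHead, Matrix.vecTail]
  -- the dual relation
  have key : gᵀ * L' * g = L' := by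
    have e1 : g * (L * (gᵀ * (L' * g))) = g * ((p:ℤ) • 1) := by
      have h1 : (g * L * gᵀ) * (L' * g) = L * (L' * g) := by rw [hsymp]
      calc g * (L * (gᵀ * (L' * g))) = (g * L * gᵀ) * (L' * g) := by
            simp only [mul_assoc]
        _ = L * (L' * g) := h1
        _ = (L * L') * g := by rw [mul_assoc]
        _ = ((p:ℤ) • 1) * g := by rw [hLL']
        _ = g * ((p:ℤ) • 1) := by
            rw [Matrix.smul_mul, Matrix.mul_smul, one_mul, mul_one]
    have e2 : L * (gᵀ * (L' * g)) = (p:ℤ) • 1 := hgu.mul_left_cancel e1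
    have e3 : (p:ℤ) • (gᵀ * (L' * g)) = (p:ℤ) • L' := by
      calc (p:ℤ) • (gᵀ * (L' * g)) = ((p:ℤ) • 1) * (gᵀ * (L' * g)) := by
            rw [Matrix.smul_mul, one_mul]
        _ = (L' * L) * (gᵀ * (L' * g)) := by rw [hL'L]
        _ = L' * (L * (gᵀ * (L' * g))) := by rw [mul_assoc]
        _ = L' * ((p:ℤ) • 1) := by rw [e2]
        _ = (p:ℤ) • L' := by rw [Matrix.mul_smul, mul_one]
    have e4 := smul_cancel _ hp0 _ _ e3
    rw [mul_assoc]; exact e4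
  -- entry equations
  have E01 := congrFun (congrFun key 0) 1
  have E03 := congrFun (congrFun key 0) 3
  have E21 := congrFun (congrFun key 2) 1
  have E23 := congrFun (congrFun key 2) 3
  have E13 := congrFun (congrFun key 1) 3
  simp [hL', Matrix.mul_apply, Fin.sum_univ_four] at E01 E03 E21 E23 E13
  -- pass to ZMod p
  set b : Fin 4 → Fin 4 → ZMod p := fun i j => ((g i j : ℤ) : ZMod p) with hb
  have f01 : b 3 0 * b 1 1 - b 1 0 * b 3 1 = 0 := by
    have h1 := congrArg (Int.cast : ℤ → ZMod p) E01
    push_cast at h1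
    rw [ZMod.natCast_self p] at h1
    simp only [hb]; linear_combination h1
  have f03 : b 3 0 * b 1 3 - b 1 0 * b 3 3 = 0 := by
    have h1 := congrArg (Int.cast : ℤ → ZMod p) E03
    push_cast at h1
    rw [ZMod.natCast_self p] at h1
    simp only [hb]; linear_combination h1
  have f21 : b 3 2 * b 1 1 - b 1 2 * b 3 1 = 0 := by
    have h1 := congrArg (Int.cast : ℤ → ZMod p) E21
    push_cast at h1
    rw [ZMod.natCast_self p] at h1
    simp only [hb]; linear_combination h1
  have f23 : b 3 2 * b 1 3 - b 1 2 * b 3 3 = 0 := by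
    have h1 := congrArg (Int.cast : ℤ → ZMod p) E23
    push_cast at h1
    rw [ZMod.natCast_self p] at h1
    simp only [hb]; linear_combination h1
  have f13 : b 3 1 * b 1 3 - b 1 1 * b 3 3 = -1 := by
    have h1 := congrArg (Int.cast : ℤ → ZMod p) E13
    push_cast at h1
    rw [ZMod.natCast_self p] at h1
    simp only [hb]; linear_combination h1
  have z10 : b 1 0 = 0 := by
    linear_combination (-(b 1 1)) * f03 + (b 1 3) * f01 + (b 1 0) * f13
  have z30 : b 3 0 = 0 := by
    linear_combination (b 3 3) * f01 - (b 3 1) * f03 + (b 3 0) * f13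
  have z12 : b 1 2 = 0 := by
    linear_combination (-(b 1 1)) * f23 + (b 1 3) * f21 + (b 1 2) * f13
  have z32 : b 3 2 = 0 := by
    linear_combination (b 3 3) * f21 - (b 3 1) * f23 + (b 3 2) * f13
  obtain ⟨m10, hm10⟩ := (ZMod.intCast_zmod_eq_zero_iff_dvd _ p).1 z10
  obtain ⟨m30, hm30⟩ := (ZMod.intCast_zmod_eq_zero_iff_dvd _ p).1 z30
  obtain ⟨m12, hm12⟩ := (ZMod.intCast_zmod_eq_zero_iff_dvd _ p).1 z12
  obtain ⟨m32, hm32⟩ := (ZMod.intCast_zmod_eq_zero_iff_dvd _ p).1 z32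
  clear f01 f03 f21 f23 f13 z10 z30 z12 z32 E01 E03 E21 E23 E13 key hb
  -- define h
  set N : Matrix (Fin 4) (Fin 4) ℤ :=
    !![0,1,0,0; (p:ℤ),0,0,0; 0,0,0,1; 0,0,(p:ℤ),0] with hN
  set h : Matrix (Fin 4) (Fin 4) ℤ :=
    !![g 1 1, m10, g 1 3, m12;
       (p:ℤ) * g 0 1, g 0 0, (p:ℤ) * g 0 3, g 0 2;
       g 3 1, m30, g 3 3, m32;
       (p:ℤ) * g 2 1, g 2 0, (p:ℤ) * g 2 3, g 2 2] with hh
  have hNgN : N * g * N = (p:ℤ) • h := by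
    ext i j
    fin_cases i <;> fin_cases j <;>
      simp only [hN, hh, Matrix.mul_apply, Fin.sum_univ_four] <;>
      simp [Matrix.smul_apply, smul_eq_mul, Matrix.vecHead, Matrix.vecTail,
        hm10, hm30, hm12, hm32] <;>
      ring
  have hNLN : N * L * Nᵀ = (p:ℤ) • L := by
    ext i j
    fin_cases i <;> fin_cases j <;>
      simp only [hN, hL, Lam, Matrix.mul_apply, Fin.sum_univ_four] <;>
      simp [Matrix.smul_apply, smul_eq_mul, Matrix.vecHead, Matrix.vecTail] <;>
      ring
  have hNN : N * N = (p:ℤ) • 1 := by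
    ext i j
    fin_cases i <;> fin_cases j <;>
      simp [hN, Matrix.mul_apply, Fin.sum_univ_four, Matrix.vecHead, Matrix.vecTail,
        Matrix.one_apply]
  -- symplectic condition for h
  have hsymp' : h * L * hᵀ = L := by
    apply smul_cancel ((p:ℤ) * (p:ℤ)) (mul_ne_zero hp0 hp0)
    have lhs : (N * g * N) * L * (N * g * N)ᵀ = ((p:ℤ) * (p:ℤ)) • (h * L * hᵀ) := by
      rw [hNgN]
      simp only [Matrix.smul_mul, Matrix.mul_smul, Matrix.transpose_smul, smul_smul]
    have rhs : (N * g * N) * L * (N * g * N)ᵀ = ((p:ℤ) * (p:ℤ)) • L := by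
      calc (N * g * N) * L * (N * g * N)ᵀ
          = N * (g * ((N * L * Nᵀ) * (gᵀ * Nᵀ))) := by
            rw [Matrix.transpose_mul, Matrix.transpose_mul]
            simp only [mul_assoc]
        _ = N * (g * (((p:ℤ) • L) * (gᵀ * Nᵀ))) := by rw [hNLN]
        _ = (p:ℤ) • (N * ((g * L * gᵀ) * Nᵀ)) := by
            simp only [Matrix.smul_mul, Matrix.mul_smul, mul_assoc]
        _ = (p:ℤ) • (N * (L * Nᵀ)) := by rw [hsymp]
        _ = (p:ℤ) • ((p:ℤ) • L) := by rw [← mul_assoc N L Nᵀ, hNLN]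
        _ = ((p:ℤ) * (p:ℤ)) • L := by rw [smul_smul]
    rw [← lhs, rhs]
  -- determinant
  have hdet' : IsUnit h.det := by
    have hNNdet : N.det * N.det = (p:ℤ)^4 := by
      rw [← Matrix.det_mul, hNN, Matrix.det_smul]
      simp
    have e0 : ((p:ℤ) • h).det = N.det * g.det * N.det := by
      rw [← hNgN, Matrix.det_mul, Matrix.det_mul]
    rw [Matrix.det_smul] at e0
    simp only [Fintype.card_fin] at e0
    have e : (p:ℤ)^4 * h.det = (p:ℤ)^4 * g.det := by
      linear_combination e0 + g.det * hNNdet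
    have := mul_left_cancel₀ (pow_ne_zero 4 hp0) e
    rw [this]; exact hdet
  refine ⟨h, ⟨hdet', hsymp'⟩, ?_⟩
  -- real matrix identity
  have hs : (Real.sqrt p)⁻¹ * (Real.sqrt p)⁻¹ = (p:ℝ)⁻¹ := by
    rw [← mul_inv, Real.mul_self_sqrt (Nat.cast_nonneg p)]
  have hpR : (p:ℝ) ≠ 0 := Nat.cast_ne_zero.mpr hp.ne_zero
  have hNmap : N.map (Int.cast : ℤ → ℝ)
      = !![0, 1, 0, 0; (p : ℝ), 0, 0, 0; 0, 0, 0, 1; 0, 0, (p : ℝ), 0] := by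
    ext i j
    fin_cases i <;> fin_cases j <;> simp [hN, Matrix.vecHead, Matrix.vecTail]
  have hmaps : ((p:ℤ) • h).map (Int.cast : ℤ → ℝ) = (p:ℝ) • h.map (Int.cast : ℤ → ℝ) := by
    ext i j
    simp only [Matrix.map_apply, Matrix.smul_apply, smul_eq_mul, Int.cast_mul, Int.cast_natCast]
  have hmapmul : ((N * g * N).map (Int.cast : ℤ → ℝ))
      = N.map (Int.cast : ℤ → ℝ) * g.map (Int.cast : ℤ → ℝ) * N.map (Int.cast : ℤ → ℝ) := by
    rw [show (Int.cast : ℤ → ℝ) = ((Int.castRingHom ℝ : ℤ →+* ℝ) : ℤ → ℝ) from rfl]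
    rw [Matrix.map_mul, Matrix.map_mul]
  rw [Wt, ← hNmap]
  simp only [Matrix.smul_mul, Matrix.mul_smul, smul_smul]
  rw [hs, ← hmapmul, hNgN, hmaps, smul_smul, inv_mul_cancel₀ hpR, one_smul]
end

section
/- The reduction-mod-2 of the conjugate W̃_p g W̃_p of any g ∈ Sp(Λ_p,ℤ) equals ι · ḡ · ι, where ι is the 4×4 permutation matrix with 2×2 diagonal blocks [[0,1],[1,0]] (mod 2) and ḡ is the reduction of g mod 2. Equivalently, ι · π(W̃_p g W̃_p) · ι = π(g) for all g ∈ Sp(Λ_p,ℤ), where π denotes reduction mod 2. -/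
open Matrix

/-- The matrix `ι` over `ℤ/2`. -/
def iot : Matrix (Fin 4) (Fin 4) (ZMod 2) :=
  !![0, 1, 0, 0; 1, 0, 0, 0; 0, 0, 0, 1; 0, 0, 1, 0]

/-- The integral matrix `√p · W̃_p`. -/
def Mz (p : ℕ) : Matrix (Fin 4) (Fin 4) ℤ :=
  !![0, 1, 0, 0; (p : ℤ), 0, 0, 0; 0, 0, 0, 1; 0, 0, (p : ℤ), 0]

/-- `ι · π(W̃_p g W̃_p) · ι = π(g)` for all `g ∈ Sp(Λ_p,ℤ)`, where `π` is
reduction mod 2. -/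
theorem stmt_10 (p : ℕ) (hp : p.Prime) (hodd : Odd p)
    (g : Matrix (Fin 4) (Fin 4) ℤ) (hg : g ∈ SpL (p : ℤ))
    (h : Matrix (Fin 4) (Fin 4) ℤ)
    (hh : h.map (Int.cast : ℤ → ℝ) = Wt p * g.map (Int.cast : ℤ → ℝ) * Wt p) :
    iot * h.map (Int.cast : ℤ → ZMod 2) * iot = g.map (Int.cast : ℤ → ZMod 2) := by
  have hp0 : (0 : ℝ) < (p : ℝ) := by exact_mod_cast hp.pos
  have hW : Wt p = (Real.sqrt p)⁻¹ • (Mz p).map (Int.cast : ℤ → ℝ) := by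
    unfold Wt Mz
    congr 1
    ext i j
    fin_cases i <;> fin_cases j <;>
      simp [Matrix.map_apply, Matrix.vecHead, Matrix.vecTail]
  -- Step 1: (p : ℤ) • h = Mz p * g * Mz p over ℤ
  have key : (p : ℤ) • h = Mz p * g * Mz p := by
    have h1 : ((Real.sqrt p)⁻¹ * (Real.sqrt p)⁻¹) = ((p : ℝ))⁻¹ := by
      rw [← mul_inv]
      congr 1
      exact Real.mul_self_sqrt hp0.le
    have h2 : h.map (Int.cast : ℤ → ℝ) =
        ((p : ℝ))⁻¹ • ((Mz p * g * Mz p).map (Int.cast : ℤ → ℝ)) := by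
      rw [hh, hW]
      rw [Matrix.smul_mul, Matrix.smul_mul, Matrix.mul_smul, smul_smul, h1]
      congr 1
      have hmm : ∀ (A B : Matrix (Fin 4) (Fin 4) ℤ),
          (A * B).map (Int.cast : ℤ → ℝ) = A.map Int.cast * B.map Int.cast :=
        fun A B => Matrix.map_mul (f := Int.castRingHom ℝ)
      rw [hmm, hmm]
    have h3 : ((p : ℤ) • h).map (Int.cast : ℤ → ℝ) =
        (Mz p * g * Mz p).map (Int.cast : ℤ → ℝ) := by
      ext i j
      have e := congrFun (congrFun h2 i) j
      simp only [Matrix.map_apply, Matrix.smul_apply, smul_eq_mul] at e ⊢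
      push_cast
      rw [e]
      field_simp
    exact Matrix.map_injective Int.cast_injective h3
  -- Step 2: reduce mod 2
  have hp2n : (p : ZMod 2) = 1 := by
    obtain ⟨k, hk⟩ := hodd
    subst hk
    push_cast
    simp [show (2 : ZMod 2) = 0 from rfl]
  have hp2 : ((p : ℤ) : ZMod 2) = 1 := by push_cast; exact hp2n
  have hM2 : (Mz p).map (Int.cast : ℤ → ZMod 2) = iot := by
    unfold Mz iot
    ext i j
    fin_cases i <;> fin_cases j <;>
      simp [Matrix.map_apply, Matrix.vecHead, Matrix.vecTail, hp2, hp2n]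
  have key2 : h.map (Int.cast : ℤ → ZMod 2) =
      iot * g.map (Int.cast : ℤ → ZMod 2) * iot := by
    have := congrArg (fun m => m.map (Int.cast : ℤ → ZMod 2)) key
    have hmm : ∀ (A B : Matrix (Fin 4) (Fin 4) ℤ),
        (A * B).map (Int.cast : ℤ → ZMod 2) = A.map Int.cast * B.map Int.cast :=
      fun A B => Matrix.map_mul (f := Int.castRingHom (ZMod 2))
    simp only [hmm, hM2] at this
    rw [← this]
    ext i j
    simp only [Matrix.map_apply, Matrix.smul_apply, smul_eq_mul, Int.cast_mul, hp2, one_mul]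
  have hii : iot * iot = 1 := by decide
  rw [key2]
  simp only [← Matrix.mul_assoc, hii, Matrix.one_mul]
  rw [Matrix.mul_assoc, hii, Matrix.mul_one]
end

section
/- Let G = ⟨Sp(Λ_p,ℤ), W̃_p⟩ ≤ GL(4,ℝ). The map π* : G → Sp(4,ℤ/2) defined by π*(g) = ḡ for g ∈ Sp(Λ_p,ℤ) and π*(g) = reduction of (g·W̃_p) times ι for g ∈ G \ Sp(Λ_p,ℤ), is a group homomorphism extending reduction mod 2. -/
open Matrix

/-- The standard symplectic form over `ℤ/2`. -/
def J2 : Matrix (Fin 4) (Fin 4) (ZMod 2) :=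
  !![0, 0, 1, 0; 0, 0, 0, 1; -1, 0, 0, 0; 0, -1, 0, 0]

/-- The group `G = ⟨Sp(Λ_p,ℤ), W̃_p⟩ ≤ GL(4,ℝ)`: every element is either in
`Sp(Λ_p,ℤ)` or of the form `h·W̃_p` with `h ∈ Sp(Λ_p,ℤ)`. -/
noncomputable def Gset (p : ℕ) : Set (Matrix (Fin 4) (Fin 4) ℝ) :=
  {m | ∃ a ∈ SpL (p : ℤ),
    m = a.map (Int.cast : ℤ → ℝ) ∨ m = a.map (Int.cast : ℤ → ℝ) * Wt p}

/-! ### Auxiliary material -/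

/-- The integral matrix `√p · W̃_p`. -/
def Wint (p : ℕ) : Matrix (Fin 4) (Fin 4) ℤ :=
  !![0, 1, 0, 0; (p:ℤ), 0, 0, 0; 0, 0, 0, 1; 0, 0, (p:ℤ), 0]

lemma Wint_sq (p : ℕ) : Wint p * Wint p = (p:ℤ) • 1 := by
  ext i j
  fin_cases i <;> fin_cases j <;>
    simp [Wint, Matrix.mul_apply, Fin.sum_univ_four, Matrix.one_apply,
      Matrix.vecHead, Matrix.vecTail]

lemma Wt_eq (p : ℕ) : Wt p = (Real.sqrt p)⁻¹ • (Wint p).map (Int.cast : ℤ → ℝ) := by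
  unfold Wt Wint
  congr 1
  ext i j
  fin_cases i <;> fin_cases j <;> simp [Matrix.vecHead, Matrix.vecTail]

lemma mapR_inj : Function.Injective
    (fun a : Matrix (Fin 4) (Fin 4) ℤ => a.map (Int.cast : ℤ → ℝ)) := by
  intro a b h
  ext i j
  have := congrFun (congrFun h i) j
  simpa [Matrix.map_apply] using this

lemma mapR_mul (a b : Matrix (Fin 4) (Fin 4) ℤ) :
    (a * b).map (Int.cast : ℤ → ℝ)
      = a.map (Int.cast : ℤ → ℝ) * b.map (Int.cast : ℤ → ℝ) := by
  have := Matrix.map_mul (L := a) (M := b) (f := Int.castRingHom ℝ)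
  simpa using this

lemma map2_mul (a b : Matrix (Fin 4) (Fin 4) ℤ) :
    (a * b).map (Int.cast : ℤ → ZMod 2)
      = a.map (Int.cast : ℤ → ZMod 2) * b.map (Int.cast : ℤ → ZMod 2) := by
  have := Matrix.map_mul (L := a) (M := b) (f := Int.castRingHom (ZMod 2))
  simpa using this

lemma spl_dvd (p : ℕ) (b : Matrix (Fin 4) (Fin 4) ℤ) (hb : b * Lam p * bᵀ = Lam p) :
    ((p:ℤ) ∣ b 1 0) ∧ ((p:ℤ) ∣ b 1 2) ∧ ((p:ℤ) ∣ b 3 0) ∧ ((p:ℤ) ∣ b 3 2) := by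
  have hB := congrArg (RingHom.mapMatrix (Int.castRingHom (ZMod p))) hb
  simp only [RingHom.mapMatrix_apply, Matrix.map_mul, Matrix.transpose_map] at hB
  have e := fun (i j : Fin 4) => congrFun (congrFun hB i) j
  have e02 := e 0 2
  have e10 := e 1 0
  have e12 := e 1 2
  have e30 := e 3 0
  have e32 := e 3 2
  simp [Matrix.mul_apply, Fin.sum_univ_four, Matrix.map_apply, Lam,
    Int.cast_natCast, ZMod.natCast_self, Matrix.vecHead, Matrix.vecTail] at e02 e10 e12 e30 e32
  refine ⟨?_, ?_, ?_, ?_⟩ <;> rw [← ZMod.intCast_zmod_eq_zero_iff_dvd]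
  · linear_combination (-(b 2 0 : ZMod p)) * e10 + (b 0 0 : ZMod p) * e12 + (-(b 1 0 : ZMod p)) * e02
  · linear_combination (-(b 2 2 : ZMod p)) * e10 + (b 0 2 : ZMod p) * e12 + (-(b 1 2 : ZMod p)) * e02
  · linear_combination (-(b 2 0 : ZMod p)) * e30 + (b 0 0 : ZMod p) * e32 + (-(b 3 0 : ZMod p)) * e02
  · linear_combination (-(b 2 2 : ZMod p)) * e30 + (b 0 2 : ZMod p) * e32 + (-(b 3 2 : ZMod p)) * e02

lemma conj_exists (p : ℕ) (hodd : Odd p) (b : Matrix (Fin 4) (Fin 4) ℤ)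
    (hb : b * Lam p * bᵀ = Lam p) :
    ∃ b' : Matrix (Fin 4) (Fin 4) ℤ, Wint p * b = b' * Wint p ∧
      b'.map (Int.cast : ℤ → ZMod 2) = iot * b.map (Int.cast : ℤ → ZMod 2) * iot := by
  obtain ⟨⟨k10, hk10⟩, ⟨k12, hk12⟩, ⟨k30, hk30⟩, ⟨k32, hk32⟩⟩ := spl_dvd p b hb
  have hp2n : ((p : ℕ) : ZMod 2) = 1 := by
    have h1 : p % 2 = 1 := Nat.odd_iff.mp hodd
    rw [← ZMod.natCast_mod p 2, h1, Nat.cast_one]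
  have hp2 : ((p : ℤ) : ZMod 2) = 1 := by push_cast; exact hp2n
  refine ⟨!![b 1 1, k10, b 1 3, k12;
             (p:ℤ) * b 0 1, b 0 0, (p:ℤ) * b 0 3, b 0 2;
             b 3 1, k30, b 3 3, k32;
             (p:ℤ) * b 2 1, b 2 0, (p:ℤ) * b 2 3, b 2 2], ?_, ?_⟩
  · ext i j
    fin_cases i <;> fin_cases j <;>
      simp [Wint, Matrix.mul_apply, Fin.sum_univ_four, Matrix.vecHead, Matrix.vecTail] <;>
      first
        | ring1
        | linear_combination hk10
        | linear_combination hk12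
        | linear_combination hk30
        | linear_combination hk32
  · ext i j
    fin_cases i <;> fin_cases j <;>
      simp [iot, Matrix.mul_apply, Fin.sum_univ_four, Matrix.map_apply,
        Matrix.vecHead, Matrix.vecTail, Matrix.vecMul, dotProduct] <;>
      push_cast [hk10, hk12, hk30, hk32, hp2, hp2n] <;> ring

lemma iot_sq : iot * iot = 1 := by decide
lemma iot_transpose : iotᵀ = iot := by decide
lemma iot_J2 : iot * J2 * iotᵀ = J2 := by decide

lemma sqrtp_ne (p : ℕ) (hp : p.Prime) : Real.sqrt p ≠ 0 := by
  have : (0:ℝ) < p := by exact_mod_cast hp.pos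
  positivity

lemma WintR_sq (p : ℕ) :
    (Wint p).map (Int.cast : ℤ → ℝ) * (Wint p).map (Int.cast : ℤ → ℝ)
      = (p : ℝ) • 1 := by
  ext i j
  fin_cases i <;> fin_cases j <;>
    simp [Wint, Matrix.mul_apply, Fin.sum_univ_four, Matrix.one_apply,
      Matrix.vecHead, Matrix.vecTail]

lemma Wt_mul_Wt (p : ℕ) (hp : p.Prime) : Wt p * Wt p = 1 := by
  rw [Wt_eq]
  rw [Matrix.smul_mul, Matrix.mul_smul, WintR_sq]
  have hps : (0:ℝ) < p := by exact_mod_cast hp.pos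
  rw [smul_smul, smul_smul]
  have : (Real.sqrt p)⁻¹ * (Real.sqrt p)⁻¹ * (p:ℝ) = 1 := by
    rw [← mul_inv, Real.mul_self_sqrt hps.le]
    exact inv_mul_cancel₀ hps.ne'
  rw [this, one_smul]

lemma psmul_eq_zero (p : ℕ) (hp : p ≠ 0) (x : Matrix (Fin 4) (Fin 4) ℤ)
    (h : (p:ℤ) • x = 0) : x = 0 := by
  ext i j
  have := congrFun (congrFun h i) j
  simp [Matrix.smul_apply] at this
  rcases this with h' | h'
  · exact absurd h' hp
  · exact h'

/-- Disjointness of the two cosets: a nonzero integral matrix times `W̃_p` is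
never integral. -/
lemma not_int (p : ℕ) (hp : p.Prime) (x : Matrix (Fin 4) (Fin 4) ℤ) (hx : x ≠ 0)
    (c : Matrix (Fin 4) (Fin 4) ℤ) :
    x.map (Int.cast : ℤ → ℝ) * Wt p ≠ c.map (Int.cast : ℤ → ℝ) := by
  intro h
  rw [Wt_eq, Matrix.mul_smul, ← mapR_mul] at h
  have hs := sqrtp_ne p hp
  have h2 : (x * Wint p).map (Int.cast : ℤ → ℝ)
      = Real.sqrt p • c.map (Int.cast : ℤ → ℝ) := by
    have := congrArg (fun M => (Real.sqrt p : ℝ) • M) h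
    simpa [smul_smul, mul_inv_cancel₀ hs] using this
  have hc : c = 0 := by
    ext i j
    have he := congrFun (congrFun h2 i) j
    simp [Matrix.map_apply, Matrix.smul_apply] at he
    by_contra hcij
    have : Real.sqrt p = (((x * Wint p) i j : ℚ) / ((c i j : ℚ)) : ℚ) := by
      have hcr : ((c i j : ℝ)) ≠ 0 := by exact_mod_cast hcij
      push_cast
      field_simp
      linarith [he]
    exact (hp.irrational_sqrt) ⟨_, this.symm⟩
  subst hc
  simp at h2
  have hxW : x * Wint p = 0 := by
    apply mapR_inj
    simpa using h2
  have h3 : x * (Wint p * Wint p) = 0 := by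
    rw [← Matrix.mul_assoc, hxW, Matrix.zero_mul]
  rw [Wint_sq, Matrix.mul_smul, Matrix.mul_one] at h3
  exact hx (psmul_eq_zero p hp.ne_zero x h3)

lemma ne_zero_of_spl (p : ℤ) (a : Matrix (Fin 4) (Fin 4) ℤ) (ha : IsUnit a.det) : a ≠ 0 := by
  intro h
  subst h
  simp [Matrix.det_zero] at ha

open scoped Classical in
/-- The candidate homomorphism. -/
noncomputable def pis (p : ℕ) (m : Matrix (Fin 4) (Fin 4) ℝ) :
    Matrix (Fin 4) (Fin 4) (ZMod 2) :=
  if h : ∃ a : Matrix (Fin 4) (Fin 4) ℤ, m = a.map (Int.cast : ℤ → ℝ) then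
    h.choose.map (Int.cast : ℤ → ZMod 2)
  else if h2 : ∃ a : Matrix (Fin 4) (Fin 4) ℤ, m = a.map (Int.cast : ℤ → ℝ) * Wt p then
    h2.choose.map (Int.cast : ℤ → ZMod 2) * iot
  else 0

lemma pis_map (p : ℕ) (a : Matrix (Fin 4) (Fin 4) ℤ) :
    pis p (a.map (Int.cast : ℤ → ℝ)) = a.map (Int.cast : ℤ → ZMod 2) := by
  rw [pis]
  have h : ∃ c : Matrix (Fin 4) (Fin 4) ℤ,
      a.map (Int.cast : ℤ → ℝ) = c.map (Int.cast : ℤ → ℝ) := ⟨a, rfl⟩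
  rw [dif_pos h]
  have : a = h.choose := mapR_inj h.choose_spec
  rw [← this]

lemma pis_coset (p : ℕ) (hp : p.Prime) (a : Matrix (Fin 4) (Fin 4) ℤ) (ha : a ≠ 0) :
    pis p (a.map (Int.cast : ℤ → ℝ) * Wt p) = a.map (Int.cast : ℤ → ZMod 2) * iot := by
  rw [pis]
  have hno : ¬ ∃ c : Matrix (Fin 4) (Fin 4) ℤ,
      a.map (Int.cast : ℤ → ℝ) * Wt p = c.map (Int.cast : ℤ → ℝ) := by
    rintro ⟨c, hc⟩
    exact not_int p hp a ha c hc
  rw [dif_neg hno]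
  have h2 : ∃ c : Matrix (Fin 4) (Fin 4) ℤ,
      a.map (Int.cast : ℤ → ℝ) * Wt p = c.map (Int.cast : ℤ → ℝ) * Wt p := ⟨a, rfl⟩
  rw [dif_pos h2]
  have hspec := h2.choose_spec
  have : a = h2.choose := by
    apply mapR_inj
    have := congrArg (fun M => M * Wt p) hspec
    simpa [Matrix.mul_assoc, Wt_mul_Wt p hp] using this
  rw [← this]

lemma lam_mod2 (p : ℕ) (hodd : Odd p) :
    (Lam p).map (Int.cast : ℤ → ZMod 2) = J2 := by
  have hp2n : ((p : ℕ) : ZMod 2) = 1 := by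
    have h1 : p % 2 = 1 := Nat.odd_iff.mp hodd
    rw [← ZMod.natCast_mod p 2, h1, Nat.cast_one]
  have hp2 : ((p : ℤ) : ZMod 2) = 1 := by push_cast; exact hp2n
  ext i j
  fin_cases i <;> fin_cases j <;>
    simp [Lam, J2, Matrix.map_apply, hp2, hp2n, Matrix.vecHead, Matrix.vecTail]

lemma red2 (p : ℕ) (hodd : Odd p) (a : Matrix (Fin 4) (Fin 4) ℤ)
    (ha : a * Lam p * aᵀ = Lam p) :
    a.map (Int.cast : ℤ → ZMod 2) * J2 * (a.map (Int.cast : ℤ → ZMod 2))ᵀ = J2 := by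
  have hB := congrArg (RingHom.mapMatrix (Int.castRingHom (ZMod 2))) ha
  simp only [RingHom.mapMatrix_apply, Matrix.map_mul, Matrix.transpose_map] at hB
  rw [show ⇑(Int.castRingHom (ZMod 2)) = (Int.cast : ℤ → ZMod 2) from rfl] at hB
  rw [lam_mod2 p hodd] at hB
  exact hB

/-! ### The main theorem -/

/-- The map `π* : G → Sp(4,ℤ/2)`, given by `π*(g) = ḡ` on `Sp(Λ_p,ℤ)` and by
`π*(g) = π(g·W̃_p)·ι` on the nontrivial coset, is a group homomorphism
extending reduction mod 2 and taking values in `Sp(4,ℤ/2)`. -/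
theorem stmt_11 (p : ℕ) (hp : p.Prime) (hodd : Odd p) :
    ∃ f : Matrix (Fin 4) (Fin 4) ℝ → Matrix (Fin 4) (Fin 4) (ZMod 2),
      (∀ a ∈ SpL (p : ℤ),
        f (a.map (Int.cast : ℤ → ℝ)) = a.map (Int.cast : ℤ → ZMod 2)) ∧
      (∀ a ∈ SpL (p : ℤ),
        f (a.map (Int.cast : ℤ → ℝ) * Wt p) = a.map (Int.cast : ℤ → ZMod 2) * iot) ∧
      (∀ m ∈ Gset p, ∀ n ∈ Gset p, f (m * n) = f m * f n) ∧
      (∀ m ∈ Gset p, f m * J2 * (f m)ᵀ = J2) := by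
  refine ⟨pis p, fun a _ => pis_map p a, fun a ha => pis_coset p hp a
    (ne_zero_of_spl p a ha.1), ?_, ?_⟩
  · -- homomorphism property
    rintro m ⟨a, ha, hma⟩ n ⟨b, hb, hnb⟩
    have hWb := conj_exists p hodd b hb.2
    obtain ⟨b', hb'W, hb'2⟩ := hWb
    have hWtb : Wt p * b.map (Int.cast : ℤ → ℝ)
        = b'.map (Int.cast : ℤ → ℝ) * Wt p := by
      rw [Wt_eq]
      rw [Matrix.smul_mul, Matrix.mul_smul, ← mapR_mul, ← mapR_mul, hb'W]
    have hane : a ≠ 0 := ne_zero_of_spl p a ha.1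
    have hbne : b ≠ 0 := ne_zero_of_spl p b hb.1
    have habne : a * b ≠ 0 := by
      intro h
      have : IsUnit ((a * b).det) := by
        rw [Matrix.det_mul]; exact ha.1.mul hb.1
      rw [h] at this
      simp [Matrix.det_zero] at this
    have hab'ne : a * b' ≠ 0 := by
      intro h
      have h1 : a * (Wint p * b) = 0 := by
        rw [hb'W, ← Matrix.mul_assoc, h, Matrix.zero_mul]
      have h2 : a * Wint p = 0 := by
        have h2' : a * Wint p * (b * b⁻¹) = 0 := by
          calc a * Wint p * (b * b⁻¹) = a * (Wint p * b) * b⁻¹ := by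
                simp only [Matrix.mul_assoc]
            _ = 0 := by rw [h1, Matrix.zero_mul]
        rwa [Matrix.mul_nonsing_inv b hb.1, Matrix.mul_one] at h2'
      have h3 : a * (Wint p * Wint p) = 0 := by
        rw [← Matrix.mul_assoc, h2, Matrix.zero_mul]
      rw [Wint_sq, Matrix.mul_smul, Matrix.mul_one] at h3
      exact hane (psmul_eq_zero p hp.ne_zero a h3)
    rcases hma with hma | hma <;> rcases hnb with hnb | hnb <;> subst hma hnb
    · rw [← mapR_mul, pis_map, pis_map, pis_map, map2_mul]
    · have harg : a.map (Int.cast : ℤ → ℝ) * (b.map (Int.cast : ℤ → ℝ) * Wt p)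
          = (a * b).map (Int.cast : ℤ → ℝ) * Wt p := by
        rw [← Matrix.mul_assoc, ← mapR_mul]
      rw [harg, pis_map, pis_coset p hp b hbne, pis_coset p hp (a*b) habne, map2_mul,
        Matrix.mul_assoc]
    · rw [pis_coset p hp a hane, pis_map]
      have : a.map (Int.cast : ℤ → ℝ) * Wt p * b.map (Int.cast : ℤ → ℝ)
          = (a * b').map (Int.cast : ℤ → ℝ) * Wt p := by
        rw [Matrix.mul_assoc, hWtb, mapR_mul, Matrix.mul_assoc]
      rw [this, pis_coset p hp (a*b') hab'ne, map2_mul, hb'2]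
      simp only [Matrix.mul_assoc, iot_sq, Matrix.mul_one]
    · rw [pis_coset p hp a hane, pis_coset p hp b hbne]
      have : a.map (Int.cast : ℤ → ℝ) * Wt p * (b.map (Int.cast : ℤ → ℝ) * Wt p)
          = (a * b').map (Int.cast : ℤ → ℝ) := by
        calc a.map (Int.cast : ℤ → ℝ) * Wt p * (b.map (Int.cast : ℤ → ℝ) * Wt p)
            = a.map (Int.cast : ℤ → ℝ) * (Wt p * b.map (Int.cast : ℤ → ℝ)) * Wt p := by
              simp only [Matrix.mul_assoc]
          _ = a.map (Int.cast : ℤ → ℝ) * (b'.map (Int.cast : ℤ → ℝ) * Wt p) * Wt p := by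
              rw [hWtb]
          _ = a.map (Int.cast : ℤ → ℝ) * b'.map (Int.cast : ℤ → ℝ) * (Wt p * Wt p) := by
              simp only [Matrix.mul_assoc]
          _ = (a * b').map (Int.cast : ℤ → ℝ) := by
              rw [Wt_mul_Wt p hp, Matrix.mul_one, mapR_mul]
      rw [this, pis_map, map2_mul, hb'2]
      simp only [Matrix.mul_assoc]
  · -- symplectic property
    rintro m ⟨a, ha, hma⟩
    have hane : a ≠ 0 := ne_zero_of_spl p a ha.1
    rcases hma with hma | hma <;> subst hma
    · rw [pis_map]
      exact red2 p hodd a ha.2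
    · rw [pis_coset p hp a hane]
      have h := red2 p hodd a ha.2
      rw [Matrix.transpose_mul, iot_transpose]
      calc a.map (Int.cast : ℤ → ZMod 2) * iot * J2 * (iot * (a.map (Int.cast : ℤ → ZMod 2))ᵀ)
          = a.map (Int.cast : ℤ → ZMod 2) * (iot * J2 * iotᵀ) * (a.map (Int.cast : ℤ → ZMod 2))ᵀ := by
            rw [iot_transpose]; simp only [Matrix.mul_assoc]
        _ = J2 := by rw [iot_J2, h]
end

section
/- The matrix ι over ℤ/2 (4×4, with 2×2 diagonal blocks [[0,1],[1,0]]) is the unique involution in Sp(4,ℤ/2) of block-diagonal form [[A,0],[0,D]] with A an involution in SL(2,ℤ/2), satisfying: conjugation by ι on the image of Sp(Λ_p,ℤ) mod 2 agrees with the map g ↦ reduction of W̃_p g W̃_p. In particular, for the element u = [[1,1,0,0],[0,1,0,0],[0,0,1,0],[0,0,-p,1]] ∈ Sp(Λ_p,ℤ) (p odd), the reduction mod 2 of W̃_p u W̃_p differs from the reduction mod 2 of u. -/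
open Matrix

/-- The element `u = [[1,1,0,0],[0,1,0,0],[0,0,1,0],[0,0,-p,1]]`. -/
def u14 (p : ℕ) : Matrix (Fin 4) (Fin 4) ℤ :=
  !![1, 1, 0, 0; 0, 1, 0, 0; 0, 0, 1, 0; 0, 0, -(p : ℤ), 1]

/-- The integer matrix `W̃_p u W̃_p` for `u = u14 p`. -/
def hu (p : ℕ) : Matrix (Fin 4) (Fin 4) ℤ :=
  !![1, 0, 0, 0; (p : ℤ), 1, 0, 0; 0, 0, 1, -1; 0, 0, 0, 1]

/-- The real equation `h = W̃ g W̃` is equivalent to the integer equation `p h = M g M`. -/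
lemma key1 (p : ℕ) (hp : 0 < p) (g h : Matrix (Fin 4) (Fin 4) ℤ) :
    h.map (Int.cast : ℤ → ℝ) = Wt p * g.map (Int.cast : ℤ → ℝ) * Wt p ↔
    (p : ℤ) • h = Mz p * g * Mz p := by
  have hp0 : (p : ℝ) ≠ 0 := by exact_mod_cast hp.ne'
  have hMr : (Mz p).map (Int.cast : ℤ → ℝ) =
      !![0, 1, 0, 0; (p : ℝ), 0, 0, 0; 0, 0, 0, 1; 0, 0, (p : ℝ), 0] := by
    ext i j; fin_cases i <;> fin_cases j <;> norm_num [Mz]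
  have hWt : Wt p * g.map (Int.cast : ℤ → ℝ) * Wt p =
      (p : ℝ)⁻¹ • ((Mz p).map Int.cast * g.map (Int.cast : ℤ → ℝ) * (Mz p).map Int.cast) := by
    rw [Wt, hMr, Matrix.smul_mul, Matrix.smul_mul, Matrix.mul_smul, smul_smul,
      ← Real.sqrt_inv, Real.mul_self_sqrt (by positivity)]
  have hmaps : ((p : ℤ) • h).map (Int.cast : ℤ → ℝ) = (p : ℝ) • h.map (Int.cast : ℤ → ℝ) := by
    ext i j
    simp only [Matrix.map_apply, Matrix.smul_apply, smul_eq_mul]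
    push_cast
    ring
  have hmm : (Mz p * g * Mz p).map (Int.cast : ℤ → ℝ) =
      (Mz p).map Int.cast * g.map (Int.cast : ℤ → ℝ) * (Mz p).map Int.cast := by
    rw [show (Int.cast : ℤ → ℝ) = ⇑(Int.castRingHom ℝ) from rfl, Matrix.map_mul, Matrix.map_mul]
  rw [hWt, eq_inv_smul_iff₀ hp0, ← hmaps, ← hmm]
  exact ⟨fun e => Matrix.map_injective Int.cast_injective e,
    fun e => congrArg (fun A => A.map (Int.cast : ℤ → ℝ)) e⟩

lemma castpN (p : ℕ) (hodd : Odd p) : ((p : ℕ) : ZMod 2) = 1 := by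
  have h1 : p % 2 = 1 := Nat.odd_iff.mp hodd
  rw [← ZMod.natCast_mod, h1, Nat.cast_one]

lemma castp (p : ℕ) (hodd : Odd p) : ((p : ℤ) : ZMod 2) = 1 := by
  rw [Int.cast_natCast, castpN p hodd]

lemma negone : (-1 : ZMod 2) = 1 := by decide

/-- Mod 2 consequence of the integer equation. -/
lemma key2 (p : ℕ) (hodd : Odd p) (g h : Matrix (Fin 4) (Fin 4) ℤ)
    (he : (p : ℤ) • h = Mz p * g * Mz p) :
    iot * g.map (Int.cast : ℤ → ZMod 2) * iot = h.map (Int.cast : ℤ → ZMod 2) := by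
  have hMi : (Mz p).map (Int.cast : ℤ → ZMod 2) = iot := by
    ext i j
    fin_cases i <;> fin_cases j <;>
      simp [Mz, iot, castp p hodd, castpN p hodd, Matrix.vecHead, Matrix.vecTail]
  have hmaps : ((p : ℤ) • h).map (Int.cast : ℤ → ZMod 2) = h.map (Int.cast : ℤ → ZMod 2) := by
    ext i j
    simp only [Matrix.map_apply, Matrix.smul_apply, smul_eq_mul, Int.cast_mul, castp p hodd,
      one_mul]
  have hmm : (Mz p * g * Mz p).map (Int.cast : ℤ → ZMod 2) =
      (Mz p).map Int.cast * g.map (Int.cast : ℤ → ZMod 2) * (Mz p).map Int.cast := by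
    rw [show (Int.cast : ℤ → ZMod 2) = ⇑(Int.castRingHom (ZMod 2)) from rfl,
      Matrix.map_mul, Matrix.map_mul]
  rw [← hMi, ← hmm, ← he, hmaps]

/-- The integer equation for `u14`. -/
lemma hu_eq (p : ℕ) : (p : ℤ) • hu p = Mz p * u14 p * Mz p := by
  ext i j
  fin_cases i <;> fin_cases j <;>
    simp [Mz, hu, u14, Matrix.mul_apply, Fin.sum_univ_four, Matrix.smul_apply,
      Matrix.vecHead, Matrix.vecTail]

lemma u14_mem (p : ℕ) : u14 p ∈ SpL (p : ℤ) := by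
  constructor
  · have : (u14 p).det = 1 := by
      simp [u14, Matrix.det_succ_row_zero, Fin.sum_univ_succ]
    rw [this]; exact isUnit_one
  · ext i j
    fin_cases i <;> fin_cases j <;>
      simp [u14, Lam, Matrix.mul_apply, Matrix.transpose_apply, Fin.sum_univ_four,
        Matrix.vecHead, Matrix.vecTail]

lemma u14_map2 (p : ℕ) (hodd : Odd p) :
    (u14 p).map (Int.cast : ℤ → ZMod 2) = !![1,1,0,0;0,1,0,0;0,0,1,0;0,0,1,1] := by
  ext i j
  fin_cases i <;> fin_cases j <;>
    simp [u14, castp p hodd, castpN p hodd, negone, Matrix.vecHead, Matrix.vecTail]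

lemma hu_map2 (p : ℕ) (hodd : Odd p) :
    (hu p).map (Int.cast : ℤ → ZMod 2) = !![1,0,0,0;1,1,0,0;0,0,1,1;0,0,0,1] := by
  ext i j
  fin_cases i <;> fin_cases j <;>
    simp [hu, castp p hodd, castpN p hodd, negone, Matrix.vecHead, Matrix.vecTail]

set_option maxHeartbeats 1000000 in
lemma helper : ∀ a b c d x y z w : ZMod 2,
    !![a,b,0,0;c,d,0,0;0,0,x,y;0,0,z,w] * !![1,1,0,0;0,1,0,0;0,0,1,0;0,0,1,1] *
      !![a,b,0,0;c,d,0,0;0,0,x,y;0,0,z,w] = !![1,0,0,0;1,1,0,0;0,0,1,1;0,0,0,1] →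
    !![a,b,0,0;c,d,0,0;0,0,x,y;0,0,z,w] = iot := by decide

/-- `ι` is the unique block-diagonal involution in `Sp(4,ℤ/2)` whose conjugation
action on the reduction mod 2 of `Sp(Λ_p,ℤ)` agrees with `g ↦ π(W̃_p g W̃_p)`;
in particular for `u` the reduction of `W̃_p u W̃_p` differs from that of `u`. -/
theorem stmt_14 (p : ℕ) (hp : p.Prime) (hodd : Odd p) :
    (∀ g ∈ SpL (p : ℤ), ∀ h : Matrix (Fin 4) (Fin 4) ℤ,
      h.map (Int.cast : ℤ → ℝ) = Wt p * g.map (Int.cast : ℤ → ℝ) * Wt p →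
      iot * g.map (Int.cast : ℤ → ZMod 2) * iot = h.map (Int.cast : ℤ → ZMod 2)) ∧
    (∀ T : Matrix (Fin 4) (Fin 4) (ZMod 2),
      T * J2 * Tᵀ = J2 → T * T = 1 →
      (T 0 2 = 0 ∧ T 0 3 = 0 ∧ T 1 2 = 0 ∧ T 1 3 = 0 ∧
       T 2 0 = 0 ∧ T 2 1 = 0 ∧ T 3 0 = 0 ∧ T 3 1 = 0) →
      (∀ g ∈ SpL (p : ℤ), ∀ h : Matrix (Fin 4) (Fin 4) ℤ,
        h.map (Int.cast : ℤ → ℝ) = Wt p * g.map (Int.cast : ℤ → ℝ) * Wt p →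
        T * g.map (Int.cast : ℤ → ZMod 2) * T = h.map (Int.cast : ℤ → ZMod 2)) →
      T = iot) ∧
    (u14 p ∈ SpL (p : ℤ) ∧
      ∀ h : Matrix (Fin 4) (Fin 4) ℤ,
        h.map (Int.cast : ℤ → ℝ) = Wt p * (u14 p).map (Int.cast : ℤ → ℝ) * Wt p →
        h.map (Int.cast : ℤ → ZMod 2) ≠ (u14 p).map (Int.cast : ℤ → ZMod 2)) := by
  have hp0 : 0 < p := hp.pos
  refine ⟨?_, ?_, u14_mem p, ?_⟩
  · intro g _ h hh
    exact key2 p hodd g h ((key1 p hp0 g h).mp hh)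
  · intro T _ _ hzero hconj
    obtain ⟨h02, h03, h12, h13, h20, h21, h30, h31⟩ := hzero
    have hreal : (hu p).map (Int.cast : ℤ → ℝ) =
        Wt p * (u14 p).map (Int.cast : ℤ → ℝ) * Wt p :=
      (key1 p hp0 (u14 p) (hu p)).mpr (hu_eq p)
    have hc := hconj (u14 p) (u14_mem p) (hu p) hreal
    rw [u14_map2 p hodd, hu_map2 p hodd] at hc
    have hT : T = !![T 0 0, T 0 1, 0, 0; T 1 0, T 1 1, 0, 0;
        0, 0, T 2 2, T 2 3; 0, 0, T 3 2, T 3 3] := by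
      ext i j
      fin_cases i <;> fin_cases j <;>
        simp [h02, h03, h12, h13, h20, h21, h30, h31, Matrix.vecHead, Matrix.vecTail]
    rw [hT] at hc ⊢
    exact helper _ _ _ _ _ _ _ _ hc
  · intro h hh hcon
    have he := (key1 p hp0 (u14 p) h).mp hh
    have e01 : (p : ℤ) * h 0 1 = 0 := by
      have := congrFun (congrFun he 0) 1
      simpa [Mz, u14, Matrix.mul_apply, Fin.sum_univ_four, Matrix.smul_apply,
        Matrix.vecHead, Matrix.vecTail] using this
    have hz : h 0 1 = 0 := by
      rcases mul_eq_zero.mp e01 with h' | h'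
      · exact absurd h' (by exact_mod_cast hp0.ne')
      · exact h'
    have := congrFun (congrFun hcon 0) 1
    simp only [Matrix.map_apply, hz, Int.cast_zero, u14] at this
    simp [Matrix.vecHead, Matrix.vecTail] at this
end
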